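/- Validity of the conditional Balke–Pearl cross-world term: under conditional instrument validity and consistency, p_{10.0s} + p_{01.0s} − p_{00.1s} − p_{01.1s} ≤ P(Y(0)=1|S=s), where p_{yx.zs} = P(Y=y,X=x|Z=z,S=s). -/

import Mathlib

/-- Probability of a (Boolean) event under a pmf on a finite space. -/
noncomputable def pr {Ω : Type} [Fintype Ω] (μ : Ω → ℝ) (A : Ω → Bool) : ℝ :=
  ∑ ω, if A ω then μ ω else 0

/-- Covariate-conditional probability p_{yx.zs} = P(Y=y, X=x | Z=z, S=s). -/
noncomputable def pc {Ω : Type} [Fintype Ω] (μ : Ω → ℝ) (Z X Y Sc : Ω → Bool)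
    (s y x z : Bool) : ℝ :=
  pr μ (fun ω => (Y ω == y) && (X ω == x) && (Z ω == z) && (Sc ω == s)) /
    pr μ (fun ω => (Z ω == z) && (Sc ω == s))


private lemma pr_nonneg' {Ω : Type} [Fintype Ω] (μ : Ω → ℝ) (h : ∀ ω, 0 ≤ μ ω) (A : Ω → Bool) :
    0 ≤ pr μ A := by
  unfold pr
  exact Finset.sum_nonneg fun ω _ => by by_cases hA : A ω <;> simp [hA, h ω]


/-- validity of the conditional Balke–Pearl cross-world term:
p_{10.0s} + p_{01.0s} − p_{00.1s} − p_{01.1s} ≤ P(Y(0)=1 | S=s). -/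
theorem bp_cross_world_term_valid
    {Ω : Type} [Fintype Ω]
    (μ : Ω → ℝ)
    (hμ_nonneg : ∀ ω, 0 ≤ μ ω)
    (hμ_sum : ∑ ω, μ ω = 1)
    (Z X Y Sc Y0 Y1 X0 X1 : Ω → Bool)
    (s : Bool)
    (hZS_pos : ∀ z : Bool, 0 < pr μ (fun ω => (Z ω == z) && (Sc ω == s)))
    -- consistency
    (hXcons : ∀ ω, X ω = if Z ω then X1 ω else X0 ω)
    (hYcons : ∀ ω, Y ω = if X ω then Y1 ω else Y0 ω)
    -- conditional instrument validity: Z ⫫ (Y(0),Y(1),X(0),X(1)) | S = s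
    (hindep : ∀ z y0 y1 x0 x1 : Bool,
      pr μ (fun ω => (Z ω == z) && (Y0 ω == y0) && (Y1 ω == y1) &&
            (X0 ω == x0) && (X1 ω == x1) && (Sc ω == s)) *
        pr μ (fun ω => Sc ω == s) =
      pr μ (fun ω => (Z ω == z) && (Sc ω == s)) *
        pr μ (fun ω => (Y0 ω == y0) && (Y1 ω == y1) &&
            (X0 ω == x0) && (X1 ω == x1) && (Sc ω == s))) :
    pc μ Z X Y Sc s true false false + pc μ Z X Y Sc s false true false
      - pc μ Z X Y Sc s false false true - pc μ Z X Y Sc s false true true ≤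
    pr μ (fun ω => Y0 ω && (Sc ω == s)) / pr μ (fun ω => Sc ω == s) := by
  have hc : 0 < pr μ (fun ω => Sc ω == s) := by
    refine lt_of_lt_of_le (hZS_pos false) ?_
    unfold pr
    refine Finset.sum_le_sum fun ω _ => ?_
    cases hs : (Sc ω == s) <;> cases hz : Z ω <;> simp [hs, hz, hμ_nonneg ω]
  have hQ : ∀ y0 y1 x0 x1 : Bool, 0 ≤ pr μ (fun ω => (Y0 ω == y0) && (Y1 ω == y1) && (X0 ω == x0) && (X1 ω == x1) && (Sc ω == s)) := fun _ _ _ _ => pr_nonneg' μ hμ_nonneg _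
  have hN1 : pr μ (fun ω => (Y ω == true) && (X ω == false) && (Z ω == false) && (Sc ω == s)) = pr μ (fun ω => (Z ω == false) && (Y0 ω == true) && (Y1 ω == false) && (X0 ω == false) && (X1 ω == false) && (Sc ω == s)) + pr μ (fun ω => (Z ω == false) && (Y0 ω == true) && (Y1 ω == false) && (X0 ω == false) && (X1 ω == true) && (Sc ω == s)) + pr μ (fun ω => (Z ω == false) && (Y0 ω == true) && (Y1 ω == true) && (X0 ω == false) && (X1 ω == false) && (Sc ω == s)) + pr μ (fun ω => (Z ω == false) && (Y0 ω == true) && (Y1 ω == true) && (X0 ω == false) && (X1 ω == true) && (Sc ω == s)) := by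
    unfold pr
    rw [← Finset.sum_add_distrib, ← Finset.sum_add_distrib, ← Finset.sum_add_distrib]
    refine Finset.sum_congr rfl fun ω _ => ?_
    simp only [hYcons, hXcons]
    rcases Bool.eq_false_or_eq_true (Z ω) with hz | hz <;>
      rcases Bool.eq_false_or_eq_true (X0 ω) with h0 | h0 <;>
      rcases Bool.eq_false_or_eq_true (X1 ω) with h1 | h1 <;>
      rcases Bool.eq_false_or_eq_true (Y0 ω) with hy0 | hy0 <;>
      rcases Bool.eq_false_or_eq_true (Y1 ω) with hy1 | hy1 <;>
      simp [hz, h0, h1, hy0, hy1]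
  have hd1 : pr μ (fun ω => (Y ω == true) && (X ω == false) && (Z ω == false) && (Sc ω == s)) / pr μ (fun ω => (Z ω == false) && (Sc ω == s)) = (pr μ (fun ω => (Y0 ω == true) && (Y1 ω == false) && (X0 ω == false) && (X1 ω == false) && (Sc ω == s)) + pr μ (fun ω => (Y0 ω == true) && (Y1 ω == false) && (X0 ω == false) && (X1 ω == true) && (Sc ω == s)) + pr μ (fun ω => (Y0 ω == true) && (Y1 ω == true) && (X0 ω == false) && (X1 ω == false) && (Sc ω == s)) + pr μ (fun ω => (Y0 ω == true) && (Y1 ω == true) && (X0 ω == false) && (X1 ω == true) && (Sc ω == s))) / pr μ (fun ω => Sc ω == s) := by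
    rw [div_eq_div_iff (hZS_pos false).ne' hc.ne', hN1]
    linear_combination (hindep false true false false false) + (hindep false true false false true) + (hindep false true true false false) + (hindep false true true false true)
  have hN2 : pr μ (fun ω => (Y ω == false) && (X ω == true) && (Z ω == false) && (Sc ω == s)) = pr μ (fun ω => (Z ω == false) && (Y0 ω == false) && (Y1 ω == false) && (X0 ω == true) && (X1 ω == false) && (Sc ω == s)) + pr μ (fun ω => (Z ω == false) && (Y0 ω == false) && (Y1 ω == false) && (X0 ω == true) && (X1 ω == true) && (Sc ω == s)) + pr μ (fun ω => (Z ω == false) && (Y0 ω == true) && (Y1 ω == false) && (X0 ω == true) && (X1 ω == false) && (Sc ω == s)) + pr μ (fun ω => (Z ω == false) && (Y0 ω == true) && (Y1 ω == false) && (X0 ω == true) && (X1 ω == true) && (Sc ω == s)) := by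
    unfold pr
    rw [← Finset.sum_add_distrib, ← Finset.sum_add_distrib, ← Finset.sum_add_distrib]
    refine Finset.sum_congr rfl fun ω _ => ?_
    simp only [hYcons, hXcons]
    rcases Bool.eq_false_or_eq_true (Z ω) with hz | hz <;>
      rcases Bool.eq_false_or_eq_true (X0 ω) with h0 | h0 <;>
      rcases Bool.eq_false_or_eq_true (X1 ω) with h1 | h1 <;>
      rcases Bool.eq_false_or_eq_true (Y0 ω) with hy0 | hy0 <;>
      rcases Bool.eq_false_or_eq_true (Y1 ω) with hy1 | hy1 <;>
      simp [hz, h0, h1, hy0, hy1]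
  have hd2 : pr μ (fun ω => (Y ω == false) && (X ω == true) && (Z ω == false) && (Sc ω == s)) / pr μ (fun ω => (Z ω == false) && (Sc ω == s)) = (pr μ (fun ω => (Y0 ω == false) && (Y1 ω == false) && (X0 ω == true) && (X1 ω == false) && (Sc ω == s)) + pr μ (fun ω => (Y0 ω == false) && (Y1 ω == false) && (X0 ω == true) && (X1 ω == true) && (Sc ω == s)) + pr μ (fun ω => (Y0 ω == true) && (Y1 ω == false) && (X0 ω == true) && (X1 ω == false) && (Sc ω == s)) + pr μ (fun ω => (Y0 ω == true) && (Y1 ω == false) && (X0 ω == true) && (X1 ω == true) && (Sc ω == s))) / pr μ (fun ω => Sc ω == s) := by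
    rw [div_eq_div_iff (hZS_pos false).ne' hc.ne', hN2]
    linear_combination (hindep false false false true false) + (hindep false false false true true) + (hindep false true false true false) + (hindep false true false true true)
  have hN3 : pr μ (fun ω => (Y ω == false) && (X ω == false) && (Z ω == true) && (Sc ω == s)) = pr μ (fun ω => (Z ω == true) && (Y0 ω == false) && (Y1 ω == false) && (X0 ω == false) && (X1 ω == false) && (Sc ω == s)) + pr μ (fun ω => (Z ω == true) && (Y0 ω == false) && (Y1 ω == false) && (X0 ω == true) && (X1 ω == false) && (Sc ω == s)) + pr μ (fun ω => (Z ω == true) && (Y0 ω == false) && (Y1 ω == true) && (X0 ω == false) && (X1 ω == false) && (Sc ω == s)) + pr μ (fun ω => (Z ω == true) && (Y0 ω == false) && (Y1 ω == true) && (X0 ω == true) && (X1 ω == false) && (Sc ω == s)) := by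
    unfold pr
    rw [← Finset.sum_add_distrib, ← Finset.sum_add_distrib, ← Finset.sum_add_distrib]
    refine Finset.sum_congr rfl fun ω _ => ?_
    simp only [hYcons, hXcons]
    rcases Bool.eq_false_or_eq_true (Z ω) with hz | hz <;>
      rcases Bool.eq_false_or_eq_true (X0 ω) with h0 | h0 <;>
      rcases Bool.eq_false_or_eq_true (X1 ω) with h1 | h1 <;>
      rcases Bool.eq_false_or_eq_true (Y0 ω) with hy0 | hy0 <;>
      rcases Bool.eq_false_or_eq_true (Y1 ω) with hy1 | hy1 <;>
      simp [hz, h0, h1, hy0, hy1]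
  have hd3 : pr μ (fun ω => (Y ω == false) && (X ω == false) && (Z ω == true) && (Sc ω == s)) / pr μ (fun ω => (Z ω == true) && (Sc ω == s)) = (pr μ (fun ω => (Y0 ω == false) && (Y1 ω == false) && (X0 ω == false) && (X1 ω == false) && (Sc ω == s)) + pr μ (fun ω => (Y0 ω == false) && (Y1 ω == false) && (X0 ω == true) && (X1 ω == false) && (Sc ω == s)) + pr μ (fun ω => (Y0 ω == false) && (Y1 ω == true) && (X0 ω == false) && (X1 ω == false) && (Sc ω == s)) + pr μ (fun ω => (Y0 ω == false) && (Y1 ω == true) && (X0 ω == true) && (X1 ω == false) && (Sc ω == s))) / pr μ (fun ω => Sc ω == s) := by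
    rw [div_eq_div_iff (hZS_pos true).ne' hc.ne', hN3]
    linear_combination (hindep true false false false false) + (hindep true false false true false) + (hindep true false true false false) + (hindep true false true true false)
  have hN4 : pr μ (fun ω => (Y ω == false) && (X ω == true) && (Z ω == true) && (Sc ω == s)) = pr μ (fun ω => (Z ω == true) && (Y0 ω == false) && (Y1 ω == false) && (X0 ω == false) && (X1 ω == true) && (Sc ω == s)) + pr μ (fun ω => (Z ω == true) && (Y0 ω == false) && (Y1 ω == false) && (X0 ω == true) && (X1 ω == true) && (Sc ω == s)) + pr μ (fun ω => (Z ω == true) && (Y0 ω == true) && (Y1 ω == false) && (X0 ω == false) && (X1 ω == true) && (Sc ω == s)) + pr μ (fun ω => (Z ω == true) && (Y0 ω == true) && (Y1 ω == false) && (X0 ω == true) && (X1 ω == true) && (Sc ω == s)) := by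
    unfold pr
    rw [← Finset.sum_add_distrib, ← Finset.sum_add_distrib, ← Finset.sum_add_distrib]
    refine Finset.sum_congr rfl fun ω _ => ?_
    simp only [hYcons, hXcons]
    rcases Bool.eq_false_or_eq_true (Z ω) with hz | hz <;>
      rcases Bool.eq_false_or_eq_true (X0 ω) with h0 | h0 <;>
      rcases Bool.eq_false_or_eq_true (X1 ω) with h1 | h1 <;>
      rcases Bool.eq_false_or_eq_true (Y0 ω) with hy0 | hy0 <;>
      rcases Bool.eq_false_or_eq_true (Y1 ω) with hy1 | hy1 <;>
      simp [hz, h0, h1, hy0, hy1]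
  have hd4 : pr μ (fun ω => (Y ω == false) && (X ω == true) && (Z ω == true) && (Sc ω == s)) / pr μ (fun ω => (Z ω == true) && (Sc ω == s)) = (pr μ (fun ω => (Y0 ω == false) && (Y1 ω == false) && (X0 ω == false) && (X1 ω == true) && (Sc ω == s)) + pr μ (fun ω => (Y0 ω == false) && (Y1 ω == false) && (X0 ω == true) && (X1 ω == true) && (Sc ω == s)) + pr μ (fun ω => (Y0 ω == true) && (Y1 ω == false) && (X0 ω == false) && (X1 ω == true) && (Sc ω == s)) + pr μ (fun ω => (Y0 ω == true) && (Y1 ω == false) && (X0 ω == true) && (X1 ω == true) && (Sc ω == s))) / pr μ (fun ω => Sc ω == s) := by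
    rw [div_eq_div_iff (hZS_pos true).ne' hc.ne', hN4]
    linear_combination (hindep true false false false true) + (hindep true false false true true) + (hindep true true false false true) + (hindep true true false true true)
  have hR : pr μ (fun ω => Y0 ω && (Sc ω == s)) = pr μ (fun ω => (Y0 ω == true) && (Y1 ω == false) && (X0 ω == false) && (X1 ω == false) && (Sc ω == s)) + pr μ (fun ω => (Y0 ω == true) && (Y1 ω == false) && (X0 ω == false) && (X1 ω == true) && (Sc ω == s)) + pr μ (fun ω => (Y0 ω == true) && (Y1 ω == false) && (X0 ω == true) && (X1 ω == false) && (Sc ω == s)) + pr μ (fun ω => (Y0 ω == true) && (Y1 ω == false) && (X0 ω == true) && (X1 ω == true) && (Sc ω == s)) + pr μ (fun ω => (Y0 ω == true) && (Y1 ω == true) && (X0 ω == false) && (X1 ω == false) && (Sc ω == s)) + pr μ (fun ω => (Y0 ω == true) && (Y1 ω == true) && (X0 ω == false) && (X1 ω == true) && (Sc ω == s)) + pr μ (fun ω => (Y0 ω == true) && (Y1 ω == true) && (X0 ω == true) && (X1 ω == false) && (Sc ω == s)) + pr μ (fun ω => (Y0 ω == true) && (Y1 ω == true) && (X0 ω ==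 true) && (X1 ω == true) && (Sc ω == s)) := by
    unfold pr
    rw [← Finset.sum_add_distrib, ← Finset.sum_add_distrib, ← Finset.sum_add_distrib, ← Finset.sum_add_distrib, ← Finset.sum_add_distrib, ← Finset.sum_add_distrib, ← Finset.sum_add_distrib]
    refine Finset.sum_congr rfl fun ω _ => ?_
    rcases Bool.eq_false_or_eq_true (Y0 ω) with hy0 | hy0 <;>
      rcases Bool.eq_false_or_eq_true (Y1 ω) with hy1 | hy1 <;>
      rcases Bool.eq_false_or_eq_true (X0 ω) with h0 | h0 <;>
      rcases Bool.eq_false_or_eq_true (X1 ω) with h1 | h1 <;>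
      simp [hy0, hy1, h0, h1]
  unfold pc
  rw [hd1, hd2, hd3, hd4, hR]
  rw [← add_div, div_sub_div_same, div_sub_div_same]
  rw [div_le_div_iff₀ hc hc]
  refine mul_le_mul_of_nonneg_right ?_ hc.le
  linarith [hQ false false false false, hQ false false false true, hQ false false true false, hQ false false true true, hQ false true false false, hQ false true false true, hQ false true true false, hQ false true true true, hQ true false false false, hQ true false false true, hQ true false true false, hQ true false true true, hQ true true false false, hQ true true false true, hQ true true true false, hQ true true true true]
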